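/- Let n be a positive natural number and E = ℝ^n with the Euclidean inner product. Let H and P be Borel probability measures on E with finite second moment, let m be a real number with 0 < m < 1/2, let G = (1−m)·H + m·P, and set Δ = μ_H − μ_P. Suppose P has covariance bounded by φ². Then for every unit vector v ∈ E and every real τ with 0 ≤ τ < (1−m)·|⟨Δ, v⟩|, the inner region of the projection of P relative to the mixture mean satisfies P({x ∈ E : |⟨x − μ_G, v⟩| < τ}) ≤ φ² / ((1−m)·|⟨Δ, v⟩| − τ)². -/

import Mathlib

open MeasureTheory RealInnerProductSpace

/-- The mean of a measure on Euclidean space. -/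
noncomputable def mean {n : ℕ} (ν : Measure (EuclideanSpace ℝ (Fin n))) :
    EuclideanSpace ℝ (Fin n) :=
  ∫ x, x ∂ν

/-- The mixture measure `(1 - m) • H + m • P`. -/
noncomputable def mixture {n : ℕ} (m : ℝ) (H P : Measure (EuclideanSpace ℝ (Fin n))) :
    Measure (EuclideanSpace ℝ (Fin n)) :=
  ENNReal.ofReal (1 - m) • H + ENNReal.ofReal m • P

/-!
Proof. Since `μ_G = (1 - m) μ_H + m μ_P`, the projection `⟨x - μ_G, v⟩` equals
`⟨x - μ_P, v⟩ - (1 - m) ⟨Δ, v⟩`. If it is smaller than `τ` in absolute value, then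
`|⟨x, v⟩ - ⟨μ_P, v⟩| ≥ (1 - m) |⟨Δ, v⟩| - τ > 0`, and Chebyshev's inequality for the
real random variable `⟨·, v⟩` under `P`, whose variance is at most `φ²`, bounds the
probability of that event.
-/

open ProbabilityTheory

lemma memLp_id_two_of_integrable_norm_sq {E : Type*} [NormedAddCommGroup E] [MeasurableSpace E]
    [OpensMeasurableSpace E] [SecondCountableTopology E] {ν : Measure E}
    (h2 : Integrable (fun x => ‖x‖ ^ 2) ν) : MemLp (fun x => x) 2 ν :=
  (memLp_two_iff_integrable_sq_norm aestronglyMeasurable_id).2 h2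

section Euclidean

variable {n : ℕ} {H P : Measure (EuclideanSpace ℝ (Fin n))} {m : ℝ}

lemma mean_mixture (hH : Integrable (fun x => x) H) (hP : Integrable (fun x => x) P)
    (hm0 : 0 ≤ m) (hm1 : m ≤ 1) :
    mean (mixture m H P) = (1 - m) • mean H + m • mean P := by
  rw [mean, mixture, integral_add_measure (hH.smul_measure ENNReal.ofReal_ne_top)
      (hP.smul_measure ENNReal.ofReal_ne_top), integral_smul_measure, integral_smul_measure,
    ENNReal.toReal_ofReal (sub_nonneg.2 hm1), ENNReal.toReal_ofReal hm0, mean, mean]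

lemma inner_sub_mean_mixture (hH : Integrable (fun x => x) H) (hP : Integrable (fun x => x) P)
    (hm0 : 0 ≤ m) (hm1 : m ≤ 1) (x v : EuclideanSpace ℝ (Fin n)) :
    ⟪x - mean (mixture m H P), v⟫ = ⟪x - mean P, v⟫ - (1 - m) * ⟪mean H - mean P, v⟫ := by
  have hx : x - ((1 - m) • mean H + m • mean P) =
      (x - mean P) - (1 - m) • (mean H - mean P) := by
    module
  rw [mean_mixture hH hP hm0 hm1, hx, inner_sub_left, real_inner_smul_left]

lemma integral_inner_eq_inner_mean {ν : Measure (EuclideanSpace ℝ (Fin n))}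
    (hν : Integrable (fun x => x) ν) (v : EuclideanSpace ℝ (Fin n)) :
    ∫ x, ⟪x, v⟫ ∂ν = ⟪mean ν, v⟫ := by
  simp_rw [real_inner_comm v]
  exact integral_inner hν v

lemma variance_inner_eq_integral {ν : Measure (EuclideanSpace ℝ (Fin n))}
    [IsProbabilityMeasure ν] (hν : Integrable (fun x => x) ν) (v : EuclideanSpace ℝ (Fin n)) :
    variance (fun x => ⟪x, v⟫) ν = ∫ x, ⟪x - mean ν, v⟫ ^ 2 ∂ν := by
  simp_rw [variance_eq_integral (by fun_prop : AEMeasurable (fun x => ⟪x, v⟫) ν),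
    integral_inner_eq_inner_mean hν, inner_sub_left]

end Euclidean

theorem poisoned_inner_bound_general {n : ℕ}
    (H P : Measure (EuclideanSpace ℝ (Fin n)))
    [IsProbabilityMeasure H] [IsProbabilityMeasure P]
    (hH2 : Integrable (fun x => ‖x‖ ^ 2) H) (hP2 : Integrable (fun x => ‖x‖ ^ 2) P)
    (m : ℝ) (hm0 : 0 < m) (hm1 : m < 1 / 2) (φ : ℝ)
    (hPcov : ∀ u : EuclideanSpace ℝ (Fin n), ‖u‖ = 1 →
      ∫ x, ⟪x - mean P, u⟫ ^ 2 ∂P ≤ φ ^ 2)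
    (v : EuclideanSpace ℝ (Fin n)) (hv : ‖v‖ = 1)
    (τ : ℝ) (hτ : τ < (1 - m) * |⟪mean H - mean P, v⟫|) :
    P {x | |⟪x - mean (mixture m H P), v⟫| < τ} ≤
      ENNReal.ofReal (φ ^ 2 / ((1 - m) * |⟪mean H - mean P, v⟫| - τ) ^ 2) := by
  set c := (1 - m) * |⟪mean H - mean P, v⟫| - τ
  have hm : 0 ≤ 1 - m := by linarith
  have hPL2 := memLp_id_two_of_integrable_norm_sq hP2
  have hP := hPL2.integrable one_le_two
  have hH := (memLp_id_two_of_integrable_norm_sq hH2).integrable one_le_two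
  have hsub : {x | |⟪x - mean (mixture m H P), v⟫| < τ} ⊆
      {x | c ≤ |⟪x, v⟫ - P[fun y => ⟪y, v⟫]|} := by
    intro x hx
    rw [Set.mem_ofPred_eq, inner_sub_mean_mixture hH hP hm0.le (by linarith)] at hx
    rw [Set.mem_ofPred_eq, integral_inner_eq_inner_mean hP, ← inner_sub_left]
    have hrev := abs_sub_abs_le_abs_sub ((1 - m) * ⟪mean H - mean P, v⟫) ⟪x - mean P, v⟫
    rw [abs_sub_comm, abs_mul, abs_of_nonneg hm] at hrev
    linarith
  calc P {x | |⟪x - mean (mixture m H P), v⟫| < τ}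
      ≤ P {x | c ≤ |⟪x, v⟫ - P[fun y => ⟪y, v⟫]|} := measure_mono hsub
    _ ≤ ENNReal.ofReal (variance (fun x => ⟪x, v⟫) P / c ^ 2) :=
      meas_ge_le_variance_div_sq (hPL2.inner_const v) (by linarith)
    _ ≤ ENNReal.ofReal (φ ^ 2 / c ^ 2) := by
      rw [variance_inner_eq_integral hP]
      gcongr
      exact hPcov v hv

theorem poisoned_inner_bound {n : ℕ} (hn : 0 < n)
    (H P : Measure (EuclideanSpace ℝ (Fin n)))
    [IsProbabilityMeasure H] [IsProbabilityMeasure P]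
    (hH2 : Integrable (fun x => ‖x‖ ^ 2) H) (hP2 : Integrable (fun x => ‖x‖ ^ 2) P)
    (m : ℝ) (hm0 : 0 < m) (hm1 : m < 1 / 2) (φ : ℝ)
    (hPcov : ∀ u : EuclideanSpace ℝ (Fin n), ‖u‖ = 1 →
      ∫ x, ⟪x - mean P, u⟫ ^ 2 ∂P ≤ φ ^ 2)
    (v : EuclideanSpace ℝ (Fin n)) (hv : ‖v‖ = 1)
    (τ : ℝ) (hτ0 : 0 ≤ τ) (hτ : τ < (1 - m) * |⟪mean H - mean P, v⟫|) :
    P {x | |⟪x - mean (mixture m H P), v⟫| < τ} ≤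
      ENNReal.ofReal (φ ^ 2 / ((1 - m) * |⟪mean H - mean P, v⟫| - τ) ^ 2) :=
  poisoned_inner_bound_general H P hH2 hP2 m hm0 hm1 φ hPcov v hv τ hτ
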